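/- Let S be a semigroup, λ a nonzero cardinal and n a positive integer with n ≤ λ. Then: (i) 𝓘_λ^n(S) is right stable if and only if S is right stable; (ii) 𝓘_λ^n(S) is left stable if and only if S is left stable; (iii) 𝓘_λ^n(S) is stable if and only if S is stable. -/

import Mathlib

open Classical

namespace ISemExt

/-- Carrier for the extension `𝓘_λ^n(S)`: an element is a function assigning to each
pair `(x,y)` of points of `lam` an optional value in `S` (its labelled graph). -/
def Elem (lam S : Type) : Type := lam → lam → Option S

/-- The zero element (the empty map). -/
def zeroE (lam S : Type) : Elem lam S := fun _ _ => none

/-- Multiplication in `𝓘_λ^n(S)`: composition of labelled partial maps,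
multiplying the labels along composable pairs. -/
noncomputable def mulE {lam S : Type} [Mul S] (f g : Elem lam S) : Elem lam S :=
  fun x z =>
    if h : ∃ y s t, f x y = some s ∧ g y z = some t then
      some (h.choose_spec.choose * h.choose_spec.choose_spec.choose)
    else none

/-- The graph of an element. -/
def graphOf {lam S : Type} (f : Elem lam S) : Set (lam × lam) :=
  {p | (f p.1 p.2).isSome}

/-- `Valid n f` says that `f` is an element of `𝓘_λ^n(S)`: it is a partial
injective labelled map (in both directions) of rank at most `n`. -/
def Valid {lam S : Type} (n : ℕ) (f : Elem lam S) : Prop :=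
  (∀ ⦃x y₁ y₂⦄, (f x y₁).isSome → (f x y₂).isSome → y₁ = y₂) ∧
  (∀ ⦃x₁ x₂ y⦄, (f x₁ y).isSome → (f x₂ y).isSome → x₁ = x₂) ∧
  (graphOf f).Finite ∧ (graphOf f).ncard ≤ n

/-- The element with rows `(a₁,…,a_i)`, `(s₁,…,s_i)`, `(b₁,…,b_i)`. -/
noncomputable def mk3 {lam S : Type} {i : ℕ} (a : Fin i → lam) (s : Fin i → S)
    (b : Fin i → lam) : Elem lam S :=
  fun x y => if h : ∃ j, a j = x ∧ b j = y then some (s h.choose) else none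

/- ### auxiliary -/

variable {lam S T : Type}

def Fnal (f : Elem lam S) : Prop :=
  ∀ ⦃x y₁ y₂⦄, (f x y₁).isSome → (f x y₂).isSome → y₁ = y₂

def Inj2 (f : Elem lam S) : Prop :=
  ∀ ⦃x₁ x₂ y⦄, (f x₁ y).isSome → (f x₂ y).isSome → x₁ = x₂

theorem Valid.fnal {n : ℕ} {f : Elem lam S} (h : Valid n f) : Fnal f := h.1
theorem Valid.inj2 {n : ℕ} {f : Elem lam S} (h : Valid n f) : Inj2 f := h.2.1
theorem Valid.fin {n : ℕ} {f : Elem lam S} (h : Valid n f) : (graphOf f).Finite := h.2.2.1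
theorem Valid.card {n : ℕ} {f : Elem lam S} (h : Valid n f) : (graphOf f).ncard ≤ n := h.2.2.2

theorem opt_isSome {α : Type*} {o : Option α} {s : α} (h : o = some s) : o.isSome := by
  rw [h]; rfl

theorem mulE_some_elim [Mul S] {f g : Elem lam S} {x z : lam} {v : S}
    (h : mulE f g x z = some v) :
    ∃ y s t, f x y = some s ∧ g y z = some t ∧ v = s * t := by
  by_cases hex : ∃ y s t, f x y = some s ∧ g y z = some t
  · have h2 : mulE f g x z
        = some (hex.choose_spec.choose * hex.choose_spec.choose_spec.choose) := by
      unfold mulE; rw [dif_pos hex]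
    rw [h2] at h
    exact ⟨hex.choose, hex.choose_spec.choose, hex.choose_spec.choose_spec.choose,
      hex.choose_spec.choose_spec.choose_spec.1,
      hex.choose_spec.choose_spec.choose_spec.2, (Option.some.inj h).symm⟩
  · rw [show mulE f g x z = none by unfold mulE; rw [dif_neg hex]] at h
    cases h

theorem mulE_isSome_elim [Mul S] {f g : Elem lam S} {x z : lam}
    (h : (mulE f g x z).isSome) :
    ∃ y s t, f x y = some s ∧ g y z = some t := by
  obtain ⟨v, hv⟩ := Option.isSome_iff_exists.mp h
  obtain ⟨y, s, t, h1, h2, _⟩ := mulE_some_elim hv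
  exact ⟨y, s, t, h1, h2⟩

theorem mulE_some_intro [Mul S] {f g : Elem lam S} (hf : Fnal f) {x y z : lam} {s t : S}
    (h1 : f x y = some s) (h2 : g y z = some t) : mulE f g x z = some (s * t) := by
  have hex : ∃ y s t, f x y = some s ∧ g y z = some t := ⟨y, s, t, h1, h2⟩
  have h0 : mulE f g x z
      = some (hex.choose_spec.choose * hex.choose_spec.choose_spec.choose) := by
    unfold mulE; rw [dif_pos hex]
  obtain ⟨y', s', t', h1', h2', hv⟩ := mulE_some_elim h0
  have hy : y' = y := hf (opt_isSome h1') (opt_isSome h1)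
  rw [hy] at h1' h2'
  have hs : s' = s := Option.some.inj (h1'.symm.trans h1)
  have ht : t' = t := Option.some.inj (h2'.symm.trans h2)
  rw [h0, hv, hs, ht]

theorem mulE_eq_none [Mul S] {f g : Elem lam S} {x z : lam}
    (h : ¬ ∃ y s t, f x y = some s ∧ g y z = some t) : mulE f g x z = none := by
  unfold mulE; rw [dif_neg h]

theorem mulE_eq_none' [Mul S] {f g : Elem lam S} {x z : lam}
    (h : ∀ y s t, f x y = some s → g y z = some t → False) : mulE f g x z = none :=
  mulE_eq_none (by rintro ⟨y, s, t, h1, h2⟩; exact h y s t h1 h2)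

theorem mulE_zero_right [Mul S] (f : Elem lam S) : mulE f (zeroE lam S) = zeroE lam S := by
  funext x z
  exact mulE_eq_none' (fun y s t _ h2 => by simp [zeroE] at h2)

theorem mulE_zero_left [Mul S] (f : Elem lam S) : mulE (zeroE lam S) f = zeroE lam S := by
  funext x z
  exact mulE_eq_none' (fun y s t h1 _ => by simp [zeroE] at h1)

theorem graph_zero : graphOf (zeroE lam S) = ∅ := by
  ext p; simp [graphOf, zeroE]

theorem valid_zero {n : ℕ} : Valid n (zeroE lam S) := by
  refine ⟨fun x y₁ y₂ h _ => by simp [zeroE] at h,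
    fun x₁ x₂ y h _ => by simp [zeroE] at h, ?_, ?_⟩
  · rw [graph_zero]; exact Set.finite_empty
  · rw [graph_zero]; simp

theorem fnal_mulE [Mul S] {f g : Elem lam S} (hf : Fnal f) (hg : Fnal g) :
    Fnal (mulE f g) := by
  intro x z₁ z₂ h1 h2
  obtain ⟨y₁, s₁, t₁, a1, b1⟩ := mulE_isSome_elim h1
  obtain ⟨y₂, s₂, t₂, a2, b2⟩ := mulE_isSome_elim h2
  have hy : y₁ = y₂ := hf (opt_isSome a1) (opt_isSome a2)
  subst hy
  exact hg (opt_isSome b1) (opt_isSome b2)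

theorem inj2_mulE [Mul S] {f g : Elem lam S} (hf : Inj2 f) (hg : Inj2 g) :
    Inj2 (mulE f g) := by
  intro x₁ x₂ z h1 h2
  obtain ⟨y₁, s₁, t₁, a1, b1⟩ := mulE_isSome_elim h1
  obtain ⟨y₂, s₂, t₂, a2, b2⟩ := mulE_isSome_elim h2
  have hy : y₁ = y₂ := hg (opt_isSome b1) (opt_isSome b2)
  subst hy
  exact hf (opt_isSome a1) (opt_isSome a2)

theorem finite_ncard_le_of_injOn {A B : Type} {s : Set A} {t : Set B} (F : A → B)
    (hmap : ∀ a ∈ s, F a ∈ t) (hinj : Set.InjOn F s) (ht : t.Finite) :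
    s.Finite ∧ s.ncard ≤ t.ncard :=
  ⟨Set.Finite.of_finite_image
      (ht.subset (by rintro q ⟨p, hp, rfl⟩; exact hmap p hp)) hinj,
   Set.ncard_le_ncard_of_injOn F hmap hinj ht⟩

theorem graph_mulE_le [Mul S] {f g : Elem lam S} (hf : Inj2 f)
    (hfin : (graphOf g).Finite) :
    (graphOf (mulE f g)).Finite ∧ (graphOf (mulE f g)).ncard ≤ (graphOf g).ncard := by
  classical
  set F : lam × lam → lam × lam := fun p =>
    if h : ∃ y s t, f p.1 y = some s ∧ g y p.2 = some t then (h.choose, p.2) else p with hF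
  have hFspec : ∀ p, (h : ∃ y s t, f p.1 y = some s ∧ g y p.2 = some t) →
      F p = (h.choose, p.2) ∧ (∃ s, f p.1 h.choose = some s) ∧
        (∃ t, g h.choose p.2 = some t) := by
    intro p h
    refine ⟨by rw [hF]; simp only [dif_pos h], ?_, ?_⟩
    · exact ⟨h.choose_spec.choose, h.choose_spec.choose_spec.choose_spec.1⟩
    · exact ⟨h.choose_spec.choose_spec.choose, h.choose_spec.choose_spec.choose_spec.2⟩
  have hmap : ∀ p ∈ graphOf (mulE f g), F p ∈ graphOf g := by
    intro p hp
    obtain ⟨y, s, t, h1, h2⟩ := mulE_isSome_elim hp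
    have h : ∃ y s t, f p.1 y = some s ∧ g y p.2 = some t := ⟨y, s, t, h1, h2⟩
    obtain ⟨hFp, _, ⟨t', ht'⟩⟩ := hFspec p h
    rw [hFp]
    exact opt_isSome ht'
  have hinj : Set.InjOn F (graphOf (mulE f g)) := by
    intro p hp q hq hpq
    obtain ⟨y₁, s₁, t₁, a1, b1⟩ := mulE_isSome_elim hp
    obtain ⟨y₂, s₂, t₂, a2, b2⟩ := mulE_isSome_elim hq
    have h1 : ∃ y s t, f p.1 y = some s ∧ g y p.2 = some t := ⟨y₁, s₁, t₁, a1, b1⟩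
    have h2 : ∃ y s t, f q.1 y = some s ∧ g y q.2 = some t := ⟨y₂, s₂, t₂, a2, b2⟩
    obtain ⟨hFp, ⟨s₁', hs₁⟩, _⟩ := hFspec p h1
    obtain ⟨hFq, ⟨s₂', hs₂⟩, _⟩ := hFspec q h2
    rw [hFp, hFq] at hpq
    have h2a := congrArg Prod.snd hpq
    have h1a := congrArg Prod.fst hpq
    have h2' : p.2 = q.2 := h2a
    have hy : h1.choose = h2.choose := h1a
    rw [hy] at hs₁
    have h1' : p.1 = q.1 := hf (opt_isSome hs₁) (opt_isSome hs₂)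
    exact Prod.ext h1' h2'
  exact finite_ncard_le_of_injOn F hmap hinj hfin


variable {lam S T : Type}

/- ### stability statements -/

def ERS (lam S : Type) [Mul S] (n : ℕ) : Prop :=
  ∀ c d : Elem lam S, Valid n c → Valid n d →
    {x : Elem lam S | ∃ u, Valid n u ∧ x = mulE c u} ⊆
      {x : Elem lam S | ∃ u, Valid n u ∧ x = mulE (mulE d c) u} →
    {x : Elem lam S | ∃ u, Valid n u ∧ x = mulE c u} =
      {x : Elem lam S | ∃ u, Valid n u ∧ x = mulE (mulE d c) u}

def ELS (lam S : Type) [Mul S] (n : ℕ) : Prop :=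
  ∀ a b : Elem lam S, Valid n a → Valid n b →
    {x : Elem lam S | ∃ u, Valid n u ∧ x = mulE u a} ⊆
      {x : Elem lam S | ∃ u, Valid n u ∧ x = mulE u (mulE a b)} →
    {x : Elem lam S | ∃ u, Valid n u ∧ x = mulE u a} =
      {x : Elem lam S | ∃ u, Valid n u ∧ x = mulE u (mulE a b)}

def SRSet (S : Type) [Mul S] : Prop :=
  ∀ c d : S, {x : S | ∃ u, x = c * u} ⊆ {x : S | ∃ u, x = d * c * u} →
    {x : S | ∃ u, x = c * u} = {x : S | ∃ u, x = d * c * u}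

def SLSet (S : Type) [Mul S] : Prop :=
  ∀ a b : S, {x : S | ∃ u, x = u * a} ⊆ {x : S | ∃ u, x = u * (a * b)} →
    {x : S | ∃ u, x = u * a} = {x : S | ∃ u, x = u * (a * b)}

def SRS' (S : Type) [Mul S] : Prop :=
  ∀ c d : S, (∀ s, ∃ t, c * s = d * c * t) → ∀ t, ∃ s, d * c * t = c * s

def SLS' (S : Type) [Mul S] : Prop :=
  ∀ a b : S, (∀ s, ∃ t, s * a = t * (a * b)) → ∀ t, ∃ s, t * (a * b) = s * a

theorem srset_iff [Mul S] : SRSet S ↔ SRS' S := by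
  constructor
  · intro h c d hcd t
    have heq := h c d (by rintro x ⟨u, rfl⟩; exact hcd u)
    have : (d * c * t) ∈ {x : S | ∃ u, x = c * u} := heq ▸ ⟨t, rfl⟩
    obtain ⟨s, hs⟩ := this
    exact ⟨s, hs⟩
  · intro h c d hsub
    refine Set.Subset.antisymm hsub ?_
    rintro x ⟨t, rfl⟩
    obtain ⟨s, hs⟩ := h c d (fun s => hsub ⟨s, rfl⟩) t
    exact ⟨s, hs⟩

theorem slset_iff [Mul S] : SLSet S ↔ SLS' S := by
  constructor
  · intro h a b hab t
    have heq := h a b (by rintro x ⟨u, rfl⟩; exact hab u)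
    have : (t * (a * b)) ∈ {x : S | ∃ u, x = u * a} := heq ▸ ⟨t, rfl⟩
    obtain ⟨s, hs⟩ := this
    exact ⟨s, hs⟩
  · intro h a b hsub
    refine Set.Subset.antisymm hsub ?_
    rintro x ⟨t, rfl⟩
    obtain ⟨s, hs⟩ := h a b (fun s => hsub ⟨s, rfl⟩) t
    exact ⟨s, hs⟩

/- ### single -/

noncomputable def single (x y : lam) (s : S) : Elem lam S :=
  fun x' y' => if x' = x ∧ y' = y then some s else none

theorem single_self (x y : lam) (s : S) : single x y s x y = some s := by
  simp [single]

theorem single_elim {x y x' y' : lam} {s v : S} (h : single x y s x' y' = some v) :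
    x' = x ∧ y' = y ∧ v = s := by
  by_cases hc : x' = x ∧ y' = y
  · rw [single, if_pos hc] at h
    exact ⟨hc.1, hc.2, (Option.some.inj h).symm⟩
  · rw [single, if_neg hc] at h; cases h

theorem single_isSome_elim {x y x' y' : lam} {s : S} (h : (single x y s x' y').isSome) :
    x' = x ∧ y' = y := by
  obtain ⟨v, hv⟩ := Option.isSome_iff_exists.mp h
  obtain ⟨h1, h2, _⟩ := single_elim hv
  exact ⟨h1, h2⟩

theorem fnal_single {x y : lam} {s : S} : Fnal (single x y s) := by
  intro a b₁ b₂ h1 h2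
  rw [(single_isSome_elim h1).2, (single_isSome_elim h2).2]

theorem graph_single (x y : lam) (s : S) : graphOf (single x y s) = {(x, y)} := by
  ext p
  constructor
  · intro hp
    obtain ⟨h1, h2⟩ := single_isSome_elim hp
    simp [Prod.ext_iff, h1, h2]
  · rintro hp
    have : p = (x, y) := hp
    rw [this]
    show (single x y s x y).isSome
    rw [single_self]; rfl

theorem valid_single {n : ℕ} (hn : 0 < n) (x y : lam) (s : S) :
    Valid n (single x y s) := by
  refine ⟨fnal_single, ?_, ?_, ?_⟩
  · intro a₁ a₂ b h1 h2
    rw [(single_isSome_elim h1).1, (single_isSome_elim h2).1]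
  · rw [graph_single]; exact Set.finite_singleton _
  · rw [graph_single, Set.ncard_singleton]; exact hn

theorem mulE_single_single [Mul S] (x y z : lam) (s t : S) :
    mulE (single x y s) (single y z t) = single x z (s * t) := by
  funext x' z'
  by_cases hc : x' = x ∧ z' = z
  · obtain ⟨rfl, rfl⟩ := hc
    rw [mulE_some_intro fnal_single (single_self _ _ _) (single_self _ _ _),
      single_self]
  · rw [single, if_neg hc]
    refine mulE_eq_none' (fun y' s' t' h1 h2 => ?_)
    obtain ⟨hx, hy, _⟩ := single_elim h1
    obtain ⟨hy', hz, _⟩ := single_elim h2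
    exact hc ⟨hx, hz⟩

/- ### the easy directions -/

theorem srs_of_ers [Nonempty lam] [Semigroup S] {n : ℕ} (hn : 0 < n)
    (h : ERS lam S n) : SRS' S := by
  intro c d hcd v
  set x₀ : lam := Classical.arbitrary lam
  set C : Elem lam S := single x₀ x₀ c with hCdef
  set D : Elem lam S := single x₀ x₀ d with hDdef
  have hDC : mulE D C = single x₀ x₀ (d * c) := mulE_single_single x₀ x₀ x₀ d c
  have heq := h C D (valid_single hn _ _ _) (valid_single hn _ _ _) ?_
  · -- extract from the equality
    have hmem : single x₀ x₀ (d * c * v) ∈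
        {x : Elem lam S | ∃ u, Valid n u ∧ x = mulE (mulE D C) u} := by
      refine ⟨single x₀ x₀ v, valid_single hn _ _ _, ?_⟩
      rw [hDC, mulE_single_single]
    rw [← heq] at hmem
    obtain ⟨u, hu, hequ⟩ := hmem
    have hval : mulE C u x₀ x₀ = some (d * c * v) := by rw [← hequ]; exact single_self _ _ _
    obtain ⟨y, s', t, h1, h2, h3⟩ := mulE_some_elim hval
    obtain ⟨_, rfl, rfl⟩ := single_elim h1
    exact ⟨t, h3⟩
  · -- the inclusion
    rintro x ⟨u, hu, rfl⟩
    by_cases hz : ∃ z w, mulE C u x₀ z = some w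
    · obtain ⟨z, w, hw⟩ := hz
      obtain ⟨y, s', t, h1, h2, h3⟩ := mulE_some_elim hw
      obtain ⟨_, rfl, rfl⟩ := single_elim h1
      obtain ⟨t', ht'⟩ := hcd t
      refine ⟨single x₀ z t', valid_single hn _ _ _, ?_⟩
      rw [hDC, mulE_single_single]
      funext x' z'
      by_cases hc : x' = x₀ ∧ z' = z
      · obtain ⟨rfl, rfl⟩ := hc
        rw [mulE_some_intro fnal_single h1 h2, single_self, ht']
      · rw [single, if_neg hc]
        refine mulE_eq_none' (fun y' s'' t'' hh1 hh2 => ?_)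
        obtain ⟨hx, hy, _⟩ := single_elim hh1
        subst hx; subst hy
        exact hc ⟨rfl, hu.fnal (opt_isSome hh2) (opt_isSome h2)⟩
    · refine ⟨zeroE lam S, valid_zero, ?_⟩
      rw [mulE_zero_right]
      funext x' z'
      show mulE C u x' z' = none
      refine mulE_eq_none' (fun y' s'' t'' hh1 hh2 => ?_)
      obtain ⟨hx, hy, _⟩ := single_elim hh1
      subst hx; subst hy
      exact hz ⟨z', s'' * t'', mulE_some_intro fnal_single hh1 hh2⟩

theorem sls_of_els [Nonempty lam] [Semigroup S] {n : ℕ} (hn : 0 < n)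
    (h : ELS lam S n) : SLS' S := by
  intro a b hab v
  set x₀ : lam := Classical.arbitrary lam
  set A : Elem lam S := single x₀ x₀ a with hAdef
  set B : Elem lam S := single x₀ x₀ b with hBdef
  have hAB : mulE A B = single x₀ x₀ (a * b) := mulE_single_single x₀ x₀ x₀ a b
  have heq := h A B (valid_single hn _ _ _) (valid_single hn _ _ _) ?_
  · have hmem : single x₀ x₀ (v * (a * b)) ∈
        {x : Elem lam S | ∃ u, Valid n u ∧ x = mulE u (mulE A B)} := by
      refine ⟨single x₀ x₀ v, valid_single hn _ _ _, ?_⟩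
      rw [hAB, mulE_single_single]
    rw [← heq] at hmem
    obtain ⟨u, hu, hequ⟩ := hmem
    have hval : mulE u A x₀ x₀ = some (v * (a * b)) := by rw [← hequ]; exact single_self _ _ _
    obtain ⟨y, s', t, h1, h2, h3⟩ := mulE_some_elim hval
    obtain ⟨rfl, _, rfl⟩ := single_elim h2
    exact ⟨s', h3⟩
  · rintro x ⟨u, hu, rfl⟩
    by_cases hz : ∃ z w, mulE u A z x₀ = some w
    · obtain ⟨z, w, hw⟩ := hz
      obtain ⟨y, s', t, h1, h2, h3⟩ := mulE_some_elim hw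
      obtain ⟨rfl, _, rfl⟩ := single_elim h2
      obtain ⟨t', ht'⟩ := hab s'
      refine ⟨single z x₀ t', valid_single hn _ _ _, ?_⟩
      rw [hAB, mulE_single_single]
      funext x' z'
      by_cases hc : x' = z ∧ z' = x₀
      · obtain ⟨rfl, rfl⟩ := hc
        rw [mulE_some_intro hu.fnal h1 h2, single_self, ht']
      · rw [single, if_neg hc]
        refine mulE_eq_none' (fun y' s'' t'' hh1 hh2 => ?_)
        obtain ⟨hy, hz', _⟩ := single_elim hh2
        subst hy; subst hz'
        exact hc ⟨hu.inj2 (opt_isSome hh1) (opt_isSome h1), rfl⟩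
    · refine ⟨zeroE lam S, valid_zero, ?_⟩
      rw [mulE_zero_left]
      funext x' z'
      show mulE u A x' z' = none
      refine mulE_eq_none' (fun y' s'' t'' hh1 hh2 => ?_)
      obtain ⟨hy, hz', _⟩ := single_elim hh2
      subst hy; subst hz'
      exact hz ⟨x', s'' * t'', mulE_some_intro hu.fnal hh1 hh2⟩


variable {lam S : Type}

theorem chain_lemma {α : Type} [Semigroup S] (hS : SRS' S)
    (Dset : Set α) (σ : α → α) (a b : α → S)
    (hmaps : ∀ x ∈ Dset, σ x ∈ Dset)
    (hkey : ∀ x ∈ Dset, ∀ s, ∃ t, a x * s = (b x * a (σ x)) * t)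
    (hper : ∀ x ∈ Dset, ∃ m, σ^[m + 1] x = x) :
    ∀ x ∈ Dset, ∀ t, ∃ s, (b x * a (σ x)) * t = a x * s := by
  have hiter : ∀ x ∈ Dset, ∀ k, σ^[k] x ∈ Dset := by
    intro x hx k
    induction k with
    | zero => exact hx
    | succ k ih => rw [Function.iterate_succ_apply']; exact hmaps _ ih
  let Q : α → ℕ → S := fun x => Nat.rec (b x) (fun k q => q * b (σ^[k + 1] x))
  have hQ0 : ∀ x, Q x 0 = b x := fun _ => rfl
  have hQs : ∀ x j, Q x (j + 1) = Q x j * b (σ^[j + 1] x) := fun _ _ => rfl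
  have hQl : ∀ x j, b x * Q (σ x) j = Q x (j + 1) := by
    intro x j
    induction j with
    | zero => rfl
    | succ j ih =>
      rw [hQs (σ x) j, ← mul_assoc, ih, ← Function.iterate_succ_apply σ (j + 1) x]
  have claim1 : ∀ j, ∀ x ∈ Dset, ∀ s, ∃ t, a x * s = (Q x j * a (σ^[j + 1] x)) * t := by
    intro j
    induction j with
    | zero =>
      intro x hx s
      obtain ⟨t, ht⟩ := hkey x hx s
      exact ⟨t, by rw [hQ0]; exact ht⟩
    | succ j ih =>
      intro x hx s
      obtain ⟨t₁, ht₁⟩ := ih x hx s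
      obtain ⟨t₂, ht₂⟩ := hkey (σ^[j + 1] x) (hiter x hx (j + 1)) t₁
      rw [← Function.iterate_succ_apply' σ (j + 1) x] at ht₂
      refine ⟨t₂, ?_⟩
      rw [ht₁, mul_assoc (Q x j), ht₂, hQs]
      simp only [mul_assoc]
  intro x hx t
  obtain ⟨m, hm⟩ := hper x hx
  have hQx : ∀ s, ∃ t', a x * s = (Q x m) * (a x) * t' := by
    intro s
    obtain ⟨t', ht'⟩ := claim1 m x hx s
    rw [hm] at ht'
    exact ⟨t', ht'⟩
  have HQ : ∀ t', ∃ s, (Q x m) * (a x) * t' = a x * s := hS (a x) (Q x m) hQx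
  cases m with
  | zero =>
    have hσx : σ x = x := hm
    obtain ⟨s, hs⟩ := HQ t
    exact ⟨s, by rw [hσx]; exact hs⟩
  | succ k =>
    have hy : σ x ∈ Dset := hmaps x hx
    obtain ⟨t₂, ht₂⟩ := claim1 k (σ x) hy t
    have hiter2 : σ^[k + 1] (σ x) = x := by
      rw [← Function.iterate_succ_apply σ (k + 1) x]; exact hm
    rw [hiter2] at ht₂
    obtain ⟨s, hs⟩ := HQ t₂
    refine ⟨s, ?_⟩
    rw [mul_assoc (b x), ht₂, ← mul_assoc, ← mul_assoc, hQl x k, mul_assoc (Q x (k+1)), ← hs]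
    simp only [mul_assoc]


variable {lam S : Type}

def domOf (f : Elem lam S) : Set lam := {x | ∃ y s, f x y = some s}

theorem domOf_finite {f : Elem lam S} (h : (graphOf f).Finite) : (domOf f).Finite := by
  have heq : domOf f = Prod.fst '' graphOf f := by
    ext x
    constructor
    · rintro ⟨y, s, hys⟩
      exact ⟨(x, y), opt_isSome hys, rfl⟩
    · rintro ⟨⟨x', y⟩, hp, rfl⟩
      obtain ⟨s, hs⟩ := Option.isSome_iff_exists.mp hp
      exact ⟨y, s, hs⟩
  rw [heq]
  exact h.image _

noncomputable def uId (C : Elem lam S) (s : lam → S) : Elem lam S :=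
  fun y z => if y = z ∧ ∃ x t, C x y = some t then some (s y) else none

theorem uId_self {C : Elem lam S} {x y : lam} {t : S} (h : C x y = some t) (s : lam → S) :
    uId C s y y = some (s y) := by
  unfold uId; rw [if_pos ⟨rfl, x, t, h⟩]

theorem uId_isSome_elim {C : Elem lam S} {s : lam → S} {y z : lam}
    (h : (uId C s y z).isSome) : y = z ∧ ∃ x t, C x y = some t := by
  by_cases hc : y = z ∧ ∃ x t, C x y = some t
  · exact hc
  · rw [show uId C s y z = none by unfold uId; rw [if_neg hc]] at h; cases h

theorem valid_uId {n : ℕ} {C : Elem lam S} (hC : Valid n C) (s : lam → S) :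
    Valid n (uId C s) := by
  refine ⟨?_, ?_, ?_, ?_⟩
  · intro y z₁ z₂ h1 h2
    rw [← (uId_isSome_elim h1).1, ← (uId_isSome_elim h2).1]
  · intro y₁ y₂ z h1 h2
    rw [(uId_isSome_elim h1).1, (uId_isSome_elim h2).1]
  all_goals {
    have hkey := finite_ncard_le_of_injOn
      (s := graphOf (uId C s)) (t := graphOf C)
      (fun p => if h : ∃ x t, C x p.2 = some t then (h.choose, p.2) else p)
      (by
        intro p hp
        obtain ⟨h1, x, t, h2⟩ := uId_isSome_elim hp
        have hex : ∃ x t, C x p.2 = some t := ⟨x, t, by rw [← h1]; exact h2⟩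
        simp only [dif_pos hex]
        exact opt_isSome hex.choose_spec.choose_spec
      )
      (by
        intro p hp q hq hpq
        obtain ⟨h1, _⟩ := uId_isSome_elim hp
        obtain ⟨h2, _⟩ := uId_isSome_elim hq
        have hex1 : ∃ x t, C x p.2 = some t := by
          obtain ⟨_, x, t, h⟩ := uId_isSome_elim hp
          exact ⟨x, t, by rw [← h1]; exact h⟩
        have hex2 : ∃ x t, C x q.2 = some t := by
          obtain ⟨_, x, t, h⟩ := uId_isSome_elim hq
          exact ⟨x, t, by rw [← h2]; exact h⟩
        simp only [dif_pos hex1, dif_pos hex2] at hpq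
        have hsnd0 := congrArg Prod.snd hpq
        have hsnd : p.2 = q.2 := hsnd0
        exact Prod.ext (h1.trans (hsnd.trans h2.symm)) hsnd
      )
      hC.fin
    first
      | exact hkey.1
      | exact le_trans hkey.2 hC.card }

noncomputable def pullback [Mul S] (C w : Elem lam S) : Elem lam S :=
  fun y z => if h : ∃ s x c v, C x y = some c ∧ w x z = some v ∧ v = c * s then
    some h.choose else none

theorem pullback_elim [Mul S] {C w : Elem lam S} {y z : lam} {s' : S}
    (h : pullback C w y z = some s') :
    ∃ x c v, C x y = some c ∧ w x z = some v ∧ v = c * s' := by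
  by_cases hex : ∃ s x c v, C x y = some c ∧ w x z = some v ∧ v = c * s
  · unfold pullback at h
    rw [dif_pos hex] at h
    have hch : hex.choose = s' := Option.some.inj h
    have hspec := hex.choose_spec
    rw [hch] at hspec
    exact hspec
  · unfold pullback at h; rw [dif_neg hex] at h; cases h

theorem pullback_intro [Mul S] {C w : Elem lam S} {y z : lam} {s : S}
    (h : ∃ x c v, C x y = some c ∧ w x z = some v ∧ v = c * s) :
    ∃ s', pullback C w y z = some s' := by
  have hex : ∃ s x c v, C x y = some c ∧ w x z = some v ∧ v = c * s := ⟨s, h⟩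
  exact ⟨hex.choose, by unfold pullback; rw [dif_pos hex]⟩

theorem ers_of_srs [Nonempty lam] [Semigroup S] {n : ℕ} (hS : SRS' S) : ERS lam S n := by
  intro C D hC hD hsub
  refine Set.Subset.antisymm hsub ?_
  rintro x ⟨u, hu, rfl⟩
  rcases isEmpty_or_nonempty S with hS0 | hS1
  · have hall : ∀ f : Elem lam S, f = zeroE lam S := by
      intro f; funext a b
      cases hfa : f a b with
      | none => rfl
      | some s => exact (hS0.false s).elim
    exact ⟨zeroE lam S, valid_zero, by
      rw [mulE_zero_right, hall (mulE (mulE D C) u)]⟩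
  obtain ⟨s₀⟩ := hS1
  haveI : Nonempty S := ⟨s₀⟩
  have hCf : Fnal C := hC.fnal
  have hCi : Inj2 C := hC.inj2
  have hDf : Fnal D := hD.fnal
  have hDi : Inj2 D := hD.inj2
  have hEf : Fnal (mulE D C) := fnal_mulE hDf hCf
  have hEi : Inj2 (mulE D C) := inj2_mulE hDi hCi
  have hdomC : ∀ x ∈ domOf C, ∃ y s, C x y = some s := fun x hx => hx
  have hdomD : ∀ x ∈ domOf D, ∃ y s, D x y = some s := fun x hx => hx
  choose! φC aC hCch using hdomC
  choose! φD aD hDch using hdomD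
  -- applying the inclusion hypothesis
  have happ : ∀ s : lam → S, ∃ u', Valid n u' ∧ mulE C (uId C s) = mulE (mulE D C) u' :=
    fun s => hsub ⟨uId C s, valid_uId hC s, rfl⟩
  have hCuId : ∀ (s : lam → S), ∀ x ∈ domOf C,
      mulE C (uId C s) x (φC x) = some (aC x * s (φC x)) := by
    intro s x hx
    exact mulE_some_intro hCf (hCch x hx) (uId_self (hCch x hx) s)
  -- domains agree
  have hsubdom : domOf C ⊆ domOf (mulE D C) := by
    intro x hx
    obtain ⟨u', hu', hequ⟩ := happ (fun _ => s₀)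
    have h1 := hCuId (fun _ => s₀) x hx
    rw [hequ] at h1
    obtain ⟨y, e, t, hE1, _, _⟩ := mulE_some_elim h1
    exact ⟨y, e, hE1⟩
  have hcount : (domOf (mulE D C)).Finite ∧
      (domOf (mulE D C)).ncard ≤ (domOf C).ncard := by
    refine finite_ncard_le_of_injOn φD ?_ ?_ (domOf_finite hC.fin)
    · intro x hx
      obtain ⟨z, v, hv⟩ := hx
      obtain ⟨y, s1, t1, h1, h2, _⟩ := mulE_some_elim hv
      have hxD : x ∈ domOf D := ⟨y, s1, h1⟩
      have hy : φD x = y := hDf (opt_isSome (hDch x hxD)) (opt_isSome h1)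
      rw [hy]; exact ⟨z, t1, h2⟩
    · intro x1 hx1 x2 hx2 h12
      obtain ⟨z1, v1, hv1⟩ := hx1
      obtain ⟨y1, s1, t1, ha1, _, _⟩ := mulE_some_elim hv1
      obtain ⟨z2, v2, hv2⟩ := hx2
      obtain ⟨y2, s2, t2, ha2, _, _⟩ := mulE_some_elim hv2
      have hx1D : x1 ∈ domOf D := ⟨y1, s1, ha1⟩
      have hx2D : x2 ∈ domOf D := ⟨y2, s2, ha2⟩
      have hc1 := hDch x1 hx1D
      rw [h12] at hc1
      exact hDi (opt_isSome hc1) (opt_isSome (hDch x2 hx2D))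
  have hdomEC : domOf (mulE D C) = domOf C :=
    (Set.eq_of_subset_of_ncard_le hsubdom hcount.2 hcount.1).symm
  -- decomposition of E = mulE D C on domOf C
  have hEdec : ∀ x ∈ domOf C, x ∈ domOf D ∧ φD x ∈ domOf C ∧
      mulE D C x (φC (φD x)) = some (aD x * aC (φD x)) := by
    intro x hx
    obtain ⟨z, v, hv⟩ := hsubdom hx
    obtain ⟨y, s1, t1, h1, h2, rfl⟩ := mulE_some_elim hv
    have hxD : x ∈ domOf D := ⟨y, s1, h1⟩
    have hy : φD x = y := hDf (opt_isSome (hDch x hxD)) (opt_isSome h1)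
    have hyC : φD x ∈ domOf C := by rw [hy]; exact ⟨z, t1, h2⟩
    exact ⟨hxD, hyC, mulE_some_intro hDf (hDch x hxD) (hCch (φD x) hyC)⟩
  -- the permutation σ
  set σ : lam → lam := fun x => if x ∈ domOf C then φD x else x with hσdef
  have hσeq : ∀ x ∈ domOf C, σ x = φD x := by
    intro x hx
    show (if x ∈ domOf C then φD x else x) = φD x
    rw [if_pos hx]
  have hσnot : ∀ x, x ∉ domOf C → σ x = x := by
    intro x hx
    show (if x ∈ domOf C then φD x else x) = x
    rw [if_neg hx]
  have hσmaps : ∀ x ∈ domOf C, σ x ∈ domOf C := by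
    intro x hx
    rw [hσeq x hx]; exact (hEdec x hx).2.1
  have hσinj : Function.Injective σ := by
    intro x1 x2 h12
    by_cases h1 : x1 ∈ domOf C <;> by_cases h2 : x2 ∈ domOf C
    · rw [hσeq x1 h1, hσeq x2 h2] at h12
      have ha := hDch x1 (hEdec x1 h1).1
      rw [h12] at ha
      exact hDi (opt_isSome ha) (opt_isSome (hDch x2 (hEdec x2 h2).1))
    · have hm1 := hσmaps x1 h1
      rw [h12, hσnot x2 h2] at hm1
      exact absurd hm1 h2
    · have hm2 := hσmaps x2 h2
      rw [← h12, hσnot x1 h1] at hm2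
      exact absurd hm2 h1
    · rw [hσnot x1 h1, hσnot x2 h2] at h12
      exact h12
  have hper : ∀ x ∈ domOf C, ∃ m, σ^[m + 1] x = x := by
    intro x hx
    have hiterm : ∀ k, σ^[k] x ∈ domOf C := by
      intro k; induction k with
      | zero => exact hx
      | succ k ih => rw [Function.iterate_succ_apply']; exact hσmaps _ ih
    haveI := (domOf_finite hC.fin).to_subtype
    obtain ⟨i, j, hij, hmap⟩ := Finite.exists_ne_map_eq_of_infinite
      (fun k : ℕ => (⟨σ^[k] x, hiterm k⟩ : domOf C))
    have hval : σ^[i] x = σ^[j] x := congrArg Subtype.val hmap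
    have key : ∀ i j : ℕ, i < j → σ^[i] x = σ^[j] x → ∃ m, σ^[m + 1] x = x := by
      intro i j hlt hvij
      have hj : σ^[i] (σ^[j - i] x) = σ^[i] x := by
        rw [← Function.iterate_add_apply σ i (j - i) x,
          show i + (j - i) = j from by omega, ← hvij]
      have hcan : σ^[j - i] x = x := (hσinj.iterate i) hj
      exact ⟨j - i - 1, by rw [show (j - i - 1) + 1 = j - i from by omega]; exact hcan⟩
    rcases Nat.lt_or_ge i j with hlt | hge
    · exact key i j hlt hval
    · exact key j i (by omega) hval.symm
  -- the key label relation
  have hkey : ∀ x ∈ domOf C, ∀ s1 : S, ∃ t, aC x * s1 = (aD x * aC (σ x)) * t := by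
    intro x hx s1
    obtain ⟨u', hu', hequ⟩ := happ (fun y' => if y' = φC x then s1 else s₀)
    have h1 := hCuId (fun y' => if y' = φC x then s1 else s₀) x hx
    rw [show (if φC x = φC x then s1 else s₀) = s1 from by simp] at h1
    rw [hequ] at h1
    obtain ⟨y1, e, t, hE1, hu1, hval⟩ := mulE_some_elim h1
    obtain ⟨hxD, hyC, hEx⟩ := hEdec x hx
    have hy1 : y1 = φC (φD x) := hEf (opt_isSome hE1) (opt_isSome hEx)
    rw [hy1] at hE1
    have he : e = aD x * aC (φD x) := Option.some.inj (hE1.symm.trans hEx)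
    refine ⟨t, ?_⟩
    rw [hval, he, hσeq x hx]
  have hrev : ∀ x ∈ domOf C, ∀ t, ∃ s, (aD x * aC (σ x)) * t = aC x * s :=
    chain_lemma hS (domOf C) σ aC aD hσmaps hkey hper
  -- decomposition of values of w = mulE (mulE D C) u
  have hw : ∀ {x z : lam} {v : S}, mulE (mulE D C) u x z = some v →
      x ∈ domOf C ∧ ∃ s, v = aC x * s := by
    intro x z v hv
    obtain ⟨y1, e, t, hE1, hu1, rfl⟩ := mulE_some_elim hv
    have hxE : x ∈ domOf (mulE D C) := ⟨y1, e, hE1⟩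
    have hxC : x ∈ domOf C := hdomEC ▸ hxE
    obtain ⟨hxD, hyC, hEx⟩ := hEdec x hxC
    have hy1 : y1 = φC (φD x) := hEf (opt_isSome hE1) (opt_isSome hEx)
    rw [hy1] at hE1
    have he : e = aD x * aC (φD x) := Option.some.inj (hE1.symm.trans hEx)
    obtain ⟨s, hs⟩ := hrev x hxC t
    refine ⟨hxC, s, ?_⟩
    rw [he, ← hσeq x hxC]
    exact hs
  have hwf : Fnal (mulE (mulE D C) u) := fnal_mulE hEf hu.fnal
  have hwi : Inj2 (mulE (mulE D C) u) := inj2_mulE hEi hu.inj2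
  -- the witness
  refine ⟨pullback C (mulE (mulE D C) u), ?_, ?_⟩
  · -- validity
    refine ⟨?_, ?_, ?_, ?_⟩
    · intro y z1 z2 h1 h2
      obtain ⟨w1, hw1⟩ := Option.isSome_iff_exists.mp h1
      obtain ⟨w2, hw2⟩ := Option.isSome_iff_exists.mp h2
      obtain ⟨x1, c1, v1, hc1, hv1, _⟩ := pullback_elim hw1
      obtain ⟨x2, c2, v2, hc2, hv2, _⟩ := pullback_elim hw2
      have hx12 : x1 = x2 := hCi (opt_isSome hc1) (opt_isSome hc2)
      rw [hx12] at hv1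
      exact hwf (opt_isSome hv1) (opt_isSome hv2)
    · intro y1 y2 z h1 h2
      obtain ⟨w1, hw1⟩ := Option.isSome_iff_exists.mp h1
      obtain ⟨w2, hw2⟩ := Option.isSome_iff_exists.mp h2
      obtain ⟨x1, c1, v1, hc1, hv1, _⟩ := pullback_elim hw1
      obtain ⟨x2, c2, v2, hc2, hv2, _⟩ := pullback_elim hw2
      have hx12 : x1 = x2 := hwi (opt_isSome hv1) (opt_isSome hv2)
      rw [hx12] at hc1
      exact hCf (opt_isSome hc1) (opt_isSome hc2)
    all_goals {
      have hwcard := graph_mulE_le hEi hu.fin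
      have hkey2 := finite_ncard_le_of_injOn
        (s := graphOf (pullback C (mulE (mulE D C) u)))
        (t := graphOf (mulE (mulE D C) u))
        (fun p => if h : ∃ x c v, C x p.1 = some c ∧ mulE (mulE D C) u x p.2 = some v
          then (h.choose, p.2) else p)
        (by
          intro p hp
          obtain ⟨w1, hw1⟩ := Option.isSome_iff_exists.mp hp
          obtain ⟨x1, c1, v1, hc1, hv1, _⟩ := pullback_elim hw1
          have hex : ∃ x c v, C x p.1 = some c ∧ mulE (mulE D C) u x p.2 = some v :=
            ⟨x1, c1, v1, hc1, hv1⟩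
          simp only [dif_pos hex]
          exact opt_isSome hex.choose_spec.choose_spec.choose_spec.2)
        (by
          intro p hp q hq hpq
          obtain ⟨w1, hw1⟩ := Option.isSome_iff_exists.mp hp
          obtain ⟨x1, c1, v1, hc1, hv1, _⟩ := pullback_elim hw1
          obtain ⟨w2, hw2⟩ := Option.isSome_iff_exists.mp hq
          obtain ⟨x2, c2, v2, hc2, hv2, _⟩ := pullback_elim hw2
          have hex1 : ∃ x c v, C x p.1 = some c ∧ mulE (mulE D C) u x p.2 = some v :=
            ⟨x1, c1, v1, hc1, hv1⟩
          have hex2 : ∃ x c v, C x q.1 = some c ∧ mulE (mulE D C) u x q.2 = some v :=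
            ⟨x2, c2, v2, hc2, hv2⟩
          simp only [dif_pos hex1, dif_pos hex2] at hpq
          have hsnd0 := congrArg Prod.snd hpq
          have hsnd : p.2 = q.2 := hsnd0
          have hfst := congrArg Prod.fst hpq
          have hfst' : hex1.choose = hex2.choose := hfst
          have hcc1 : (C hex1.choose p.1).isSome :=
            opt_isSome hex1.choose_spec.choose_spec.choose_spec.1
          have hcc2 : (C hex2.choose q.1).isSome :=
            opt_isSome hex2.choose_spec.choose_spec.choose_spec.1
          rw [hfst'] at hcc1
          exact Prod.ext (hCf hcc1 hcc2) hsnd)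
        hwcard.1
      first
        | exact hkey2.1
        | exact le_trans hkey2.2 (le_trans hwcard.2 hu.card) }
  · -- the equality
    funext x z
    cases hv : mulE (mulE D C) u x z with
    | some v =>
      obtain ⟨hxC, s, hs⟩ := hw hv
      obtain ⟨s', hs'⟩ := pullback_intro ⟨x, aC x, v, hCch x hxC, hv, hs⟩
      obtain ⟨x', c', v', hc', hv', hvs'⟩ := pullback_elim hs'
      have hx' : x' = x := hCi (opt_isSome hc') (opt_isSome (hCch x hxC))
      rw [hx'] at hc' hv'
      have hcc : c' = aC x := Option.some.inj (hc'.symm.trans (hCch x hxC))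
      have hvv : v' = v := Option.some.inj (hv'.symm.trans hv)
      rw [mulE_some_intro hCf (hCch x hxC) hs', ← hvv, hvs', hcc]
    | none =>
      symm
      refine mulE_eq_none' (fun y c s' h1 h2 => ?_)
      obtain ⟨x', c'', v', hc'', hv', _⟩ := pullback_elim h2
      have hx' : x' = x := hCi (opt_isSome hc'') (opt_isSome h1)
      rw [hx', hv] at hv'
      cases hv'


variable {lam S T : Type}

def transp (e : S → T) (f : Elem lam S) : Elem lam T :=
  fun x y => (f y x).map e

theorem transp_transp {e : S → T} {e' : T → S} (h : ∀ s, e' (e s) = s)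
    (f : Elem lam S) : transp e' (transp e f) = f := by
  funext x y
  cases hf : f x y <;> simp [transp, hf, h]

theorem transp_some {e : S → T} {f : Elem lam S} {x y : lam} {s : S}
    (h : f y x = some s) : transp e f x y = some (e s) := by
  simp [transp, h]

theorem transp_some_elim {e : S → T} {f : Elem lam S} {x y : lam} {t : T}
    (h : transp e f x y = some t) : ∃ s, f y x = some s ∧ t = e s := by
  rcases Option.map_eq_some_iff.mp h with ⟨s, hs, hes⟩
  exact ⟨s, hs, hes.symm⟩

theorem transp_isSome {e : S → T} {f : Elem lam S} {x y : lam} :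
    (transp e f x y).isSome ↔ (f y x).isSome := by
  cases hf : f y x <;> simp [transp, hf]

theorem fnal_transp {e : S → T} {f : Elem lam S} (h : Inj2 f) : Fnal (transp e f) := by
  intro x y₁ y₂ h1 h2
  exact h (transp_isSome.mp h1) (transp_isSome.mp h2)

theorem inj2_transp {e : S → T} {f : Elem lam S} (h : Fnal f) : Inj2 (transp e f) := by
  intro x₁ x₂ y h1 h2
  exact h (transp_isSome.mp h1) (transp_isSome.mp h2)

theorem graph_transp (e : S → T) (f : Elem lam S) :
    graphOf (transp e f) = Prod.swap '' graphOf f := by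
  ext ⟨x, y⟩
  constructor
  · intro hp
    exact ⟨(y, x), transp_isSome.mp hp, rfl⟩
  · rintro ⟨⟨a, b⟩, hab, hs⟩
    obtain ⟨rfl, rfl⟩ : b = x ∧ a = y := by
      rw [Prod.ext_iff] at hs; exact ⟨hs.1, hs.2⟩
    exact transp_isSome.mpr hab

theorem valid_transp {n : ℕ} {e : S → T} {f : Elem lam S} (h : Valid n f) :
    Valid n (transp e f) := by
  refine ⟨fnal_transp h.inj2, inj2_transp h.fnal, ?_, ?_⟩
  · rw [graph_transp]; exact h.fin.image _
  · rw [graph_transp, Set.ncard_image_of_injective _ Prod.swap_injective]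
    exact h.card

theorem mulE_transp [Mul S] [Mul T] {e : S → T} (he : ∀ a b : S, e (a * b) = e b * e a)
    {f g : Elem lam S} (hf : Fnal f) (hg : Inj2 g) :
    mulE (transp e g) (transp e f) = transp e (mulE f g) := by
  funext x z
  cases hv : mulE f g z x with
  | some v =>
    obtain ⟨y, s, t, h1, h2, rfl⟩ := mulE_some_elim hv
    rw [mulE_some_intro (fnal_transp hg) (transp_some h2) (transp_some h1),
      transp_some hv, he]
  | none =>
    have h0 : transp e (mulE f g) x z = none := by simp [transp, hv]
    rw [h0]
    refine mulE_eq_none' (fun y s' t' h1 h2 => ?_)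
    obtain ⟨sg, hsg, _⟩ := transp_some_elim h1
    obtain ⟨sf, hsf, _⟩ := transp_some_elim h2
    rw [mulE_some_intro hf hsf hsg] at hv
    cases hv

/- ### passing between S and Sᵐᵒᵖ -/

theorem op_antimul [Mul S] (a b : S) :
    MulOpposite.op (a * b) = MulOpposite.op b * MulOpposite.op a := rfl

theorem unop_antimul [Mul S] (a b : Sᵐᵒᵖ) :
    MulOpposite.unop (a * b) = MulOpposite.unop b * MulOpposite.unop a := rfl

theorem els_iff_ers_op [Mul S] {n : ℕ} :
    ELS lam S n ↔ ERS lam Sᵐᵒᵖ n := by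
  have hoo : ∀ f : Elem lam S,
      transp (MulOpposite.unop (α := S)) (transp MulOpposite.op f) = f :=
    fun f => transp_transp (fun s => rfl) f
  have huo : ∀ f : Elem lam Sᵐᵒᵖ,
      transp (MulOpposite.op (α := S)) (transp MulOpposite.unop f) = f :=
    fun f => transp_transp (fun s => rfl) f
  constructor
  · intro hL c d hc hd hsub
    set a := transp (MulOpposite.unop (α := S)) c with ha
    set b := transp (MulOpposite.unop (α := S)) d with hb
    have hva : Valid n a := valid_transp hc
    have hvb : Valid n b := valid_transp hd
    have hdc : mulE d c = transp MulOpposite.op (mulE a b) := by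
      rw [ha, hb, ← mulE_transp op_antimul hva.fnal hvb.inj2, huo, huo]
    have hL2 := hL a b hva hvb ?_
    · refine Set.Subset.antisymm hsub ?_
      rintro x ⟨u₂, hu₂, rfl⟩
      have hx : transp MulOpposite.unop (mulE (mulE d c) u₂)
          = mulE (transp MulOpposite.unop u₂) (mulE a b) := by
        rw [hdc, ← mulE_transp unop_antimul
          (fnal_transp (inj2_mulE hva.inj2 hvb.inj2)) hu₂.inj2, hoo]
      have hmem : transp MulOpposite.unop (mulE (mulE d c) u₂) ∈
          {x : Elem lam S | ∃ u, Valid n u ∧ x = mulE u a} := by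
        rw [hL2]
        exact ⟨transp MulOpposite.unop u₂, valid_transp hu₂, hx⟩
      obtain ⟨u₃, hu₃, hequ⟩ := hmem
      refine ⟨transp MulOpposite.op u₃, valid_transp hu₃, ?_⟩
      rw [← huo (mulE (mulE d c) u₂), hequ,
        ← mulE_transp op_antimul hu₃.fnal hva.inj2, ha, huo]
    · rintro x ⟨u₂, hu₂, rfl⟩
      have hx : transp MulOpposite.op (mulE u₂ a)
          = mulE c (transp MulOpposite.op u₂) := by
        rw [← mulE_transp op_antimul hu₂.fnal hva.inj2, ha, huo]
      have hmem : transp MulOpposite.op (mulE u₂ a) ∈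
          {x : Elem lam Sᵐᵒᵖ | ∃ u, Valid n u ∧ x = mulE (mulE d c) u} :=
        hsub ⟨transp MulOpposite.op u₂, valid_transp hu₂, hx⟩
      obtain ⟨u₃, hu₃, hequ⟩ := hmem
      refine ⟨transp MulOpposite.unop u₃, valid_transp hu₃, ?_⟩
      rw [← hoo (mulE u₂ a), hequ, hdc,
        ← mulE_transp unop_antimul
          (fnal_transp (inj2_mulE hva.inj2 hvb.inj2)) hu₃.inj2, hoo]
  · intro hR a b hva hvb hsub
    set c := transp (MulOpposite.op (α := S)) a with hc
    set d := transp (MulOpposite.op (α := S)) b with hd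
    have hvc : Valid n c := valid_transp hva
    have hvd : Valid n d := valid_transp hvb
    have hdc : mulE d c = transp MulOpposite.op (mulE a b) := by
      rw [hc, hd, ← mulE_transp op_antimul hva.fnal hvb.inj2]
    have hR2 := hR c d hvc hvd ?_
    · refine Set.Subset.antisymm hsub ?_
      rintro x ⟨u₂, hu₂, rfl⟩
      have hx : transp MulOpposite.op (mulE u₂ (mulE a b))
          = mulE (mulE d c) (transp MulOpposite.op u₂) := by
        rw [← mulE_transp op_antimul hu₂.fnal (inj2_mulE hva.inj2 hvb.inj2), hdc]
      have hmem : transp MulOpposite.op (mulE u₂ (mulE a b)) ∈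
          {x : Elem lam Sᵐᵒᵖ | ∃ u, Valid n u ∧ x = mulE c u} := by
        rw [hR2]
        exact ⟨transp MulOpposite.op u₂, valid_transp hu₂, hx⟩
      obtain ⟨u₃, hu₃, hequ⟩ := hmem
      refine ⟨transp MulOpposite.unop u₃, valid_transp hu₃, ?_⟩
      rw [← hoo (mulE u₂ (mulE a b)), hequ, hc,
        ← mulE_transp unop_antimul (fnal_transp hva.inj2) hu₃.inj2, hoo]
    · rintro x ⟨u₂, hu₂, rfl⟩
      have hx : transp MulOpposite.unop (mulE c u₂)
          = mulE (transp MulOpposite.unop u₂) a := by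
        rw [hc, ← mulE_transp unop_antimul (fnal_transp hva.inj2) hu₂.inj2, hoo]
      have hmem : transp MulOpposite.unop (mulE c u₂) ∈
          {x : Elem lam S | ∃ u, Valid n u ∧ x = mulE u (mulE a b)} :=
        hsub ⟨transp MulOpposite.unop u₂, valid_transp hu₂, hx⟩
      obtain ⟨u₃, hu₃, hequ⟩ := hmem
      refine ⟨transp MulOpposite.op u₃, valid_transp hu₃, ?_⟩
      rw [← huo (mulE c u₂), hequ,
        ← mulE_transp op_antimul hu₃.fnal (inj2_mulE hva.inj2 hvb.inj2), hdc]

theorem sls'_iff_srs'_op [Semigroup S] : SLS' S ↔ SRS' Sᵐᵒᵖ := by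
  constructor
  · intro h c d hcd t
    have hpre : ∀ s : S, ∃ t', s * MulOpposite.unop c
        = t' * (MulOpposite.unop c * MulOpposite.unop d) := by
      intro s
      obtain ⟨t', ht'⟩ := hcd (MulOpposite.op s)
      refine ⟨MulOpposite.unop t', ?_⟩
      have h2 := congrArg MulOpposite.unop ht'
      simpa using h2
    obtain ⟨s, hs⟩ := h (MulOpposite.unop c) (MulOpposite.unop d) hpre (MulOpposite.unop t)
    refine ⟨MulOpposite.op s, ?_⟩
    apply MulOpposite.unop_injective
    simpa using hs
  · intro h a b hab t
    have hpre : ∀ s : Sᵐᵒᵖ, ∃ t', MulOpposite.op a * s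
        = MulOpposite.op b * MulOpposite.op a * t' := by
      intro s
      obtain ⟨t', ht'⟩ := hab (MulOpposite.unop s)
      refine ⟨MulOpposite.op t', ?_⟩
      apply MulOpposite.unop_injective
      simpa using ht'
    obtain ⟨s, hs⟩ := h (MulOpposite.op a) (MulOpposite.op b) hpre (MulOpposite.op t)
    refine ⟨MulOpposite.unop s, ?_⟩
    have h2 := congrArg MulOpposite.unop hs
    simpa using h2

theorem ers_iff_full {lam S : Type} [Nonempty lam] [Semigroup S] {n : ℕ} (hn : 0 < n) :
    ERS lam S n ↔ SRSet S :=
  ⟨fun h => srset_iff.mpr (srs_of_ers hn h), fun h => ers_of_srs (srset_iff.mp h)⟩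

theorem els_iff_full {lam S : Type} [Nonempty lam] [Semigroup S] {n : ℕ} (hn : 0 < n) :
    ELS lam S n ↔ SLSet S := by
  rw [els_iff_ers_op]
  constructor
  · intro h
    exact slset_iff.mpr (sls'_iff_srs'_op.mpr (srs_of_ers hn h))
  · intro h
    exact ers_of_srs (sls'_iff_srs'_op.mp (slset_iff.mp h))

/-- `𝓘_λ^n(S)` is right (resp. left) stable iff `S` is right (resp. left) stable,
and `𝓘_λ^n(S)` is stable iff `S` is stable. -/
theorem stable_iff (lam S : Type) [Nonempty lam] [Semigroup S]
    (n : ℕ) (hn : 0 < n) (hcard : (n : Cardinal) ≤ Cardinal.mk lam) :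
    ((∀ c d : Elem lam S, Valid n c → Valid n d →
        {x : Elem lam S | ∃ u, Valid n u ∧ x = mulE c u} ⊆
          {x : Elem lam S | ∃ u, Valid n u ∧ x = mulE (mulE d c) u} →
        {x : Elem lam S | ∃ u, Valid n u ∧ x = mulE c u} =
          {x : Elem lam S | ∃ u, Valid n u ∧ x = mulE (mulE d c) u}) ↔
      (∀ c d : S, {x : S | ∃ u, x = c * u} ⊆ {x : S | ∃ u, x = d * c * u} →
        {x : S | ∃ u, x = c * u} = {x : S | ∃ u, x = d * c * u})) ∧
    ((∀ a b : Elem lam S, Valid n a → Valid n b →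
        {x : Elem lam S | ∃ u, Valid n u ∧ x = mulE u a} ⊆
          {x : Elem lam S | ∃ u, Valid n u ∧ x = mulE u (mulE a b)} →
        {x : Elem lam S | ∃ u, Valid n u ∧ x = mulE u a} =
          {x : Elem lam S | ∃ u, Valid n u ∧ x = mulE u (mulE a b)}) ↔
      (∀ a b : S, {x : S | ∃ u, x = u * a} ⊆ {x : S | ∃ u, x = u * (a * b)} →
        {x : S | ∃ u, x = u * a} = {x : S | ∃ u, x = u * (a * b)})) ∧
    (((∀ c d : Elem lam S, Valid n c → Valid n d →
        {x : Elem lam S | ∃ u, Valid n u ∧ x = mulE c u} ⊆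
          {x : Elem lam S | ∃ u, Valid n u ∧ x = mulE (mulE d c) u} →
        {x : Elem lam S | ∃ u, Valid n u ∧ x = mulE c u} =
          {x : Elem lam S | ∃ u, Valid n u ∧ x = mulE (mulE d c) u}) ∧
      (∀ a b : Elem lam S, Valid n a → Valid n b →
        {x : Elem lam S | ∃ u, Valid n u ∧ x = mulE u a} ⊆
          {x : Elem lam S | ∃ u, Valid n u ∧ x = mulE u (mulE a b)} →
        {x : Elem lam S | ∃ u, Valid n u ∧ x = mulE u a} =
          {x : Elem lam S | ∃ u, Valid n u ∧ x = mulE u (mulE a b)})) ↔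
      ((∀ c d : S, {x : S | ∃ u, x = c * u} ⊆ {x : S | ∃ u, x = d * c * u} →
        {x : S | ∃ u, x = c * u} = {x : S | ∃ u, x = d * c * u}) ∧
      (∀ a b : S, {x : S | ∃ u, x = u * a} ⊆ {x : S | ∃ u, x = u * (a * b)} →
        {x : S | ∃ u, x = u * a} = {x : S | ∃ u, x = u * (a * b)}))) := by
  have h1 : ERS lam S n ↔ SRSet S := ers_iff_full hn
  have h2 : ELS lam S n ↔ SLSet S := els_iff_full hn
  exact ⟨h1, h2, and_congr h1 h2⟩

end ISemExt
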